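/- Let X be a separable Banach space and let (x_i, f_i) be a locally shrinking Schauder frame of X with projection constant K. Let Y be a finite-dimensional subspace of X. Then for every ε > 0 there exists N ∈ ℕ such that ‖y‖ ≤ (K + ε)‖y + x‖ whenever x ∈ span(x_i : i ≥ N) and y ∈ Y. -/

import Mathlib

open Filter Topology

/-- `sup { |g z| : z ∈ span (x i : i ≥ n), ‖z‖ ≤ 1 }`. -/
noncomputable def tailSupX {X : Type*} [NormedAddCommGroup X] [NormedSpace ℝ X]
    (x : ℕ → X) (g : X →L[ℝ] ℝ) (n : ℕ) : ℝ :=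
  sSup ((fun z : X => |g z|) ''
    {z | z ∈ Submodule.span ℝ (x '' {i | n ≤ i}) ∧ ‖z‖ ≤ 1})

/-!
Write `P n v = ∑ i < n, f i v • x i`, so that `‖P n‖ ≤ K`. On the finite-dimensional
space `Y` the pointwise convergence `P n → id` is uniform, so `‖y - P n y‖ ≤ δ ‖y‖` for one fixed
`n`. Local shrinking makes the finitely many functionals `f 0, …, f (n - 1)` small on a far enough
tail span, so `‖P n z‖ ≤ δ ‖z‖` there. Then `y = (y - P n y) + P n (y + z) - P n z` gives
`(1 - 2δ) ‖y‖ ≤ (K + δ) ‖y + z‖`.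
-/

section FiniteDimensional

variable {𝕜 E F ι : Type*} [NontriviallyNormedField 𝕜] [CompleteSpace 𝕜]
  [NormedAddCommGroup E] [NormedSpace 𝕜 E] [NormedAddCommGroup F] [NormedSpace 𝕜 F]

theorem ContinuousLinearMap.tendsto_of_forall_tendsto_apply [FiniteDimensional 𝕜 E]
    {T : ι → E →L[𝕜] F} {S : E →L[𝕜] F} {l : Filter ι}
    (h : ∀ v, Tendsto (fun i => T i v) l (𝓝 (S v))) : Tendsto T l (𝓝 S) := by
  let b := Module.finBasis 𝕜 E
  obtain ⟨C, -, hC⟩ := b.exists_opNorm_le (F := F)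
  rw [tendsto_iff_norm_sub_tendsto_zero]
  have hbasis : Tendsto (fun i => C * ∑ j, ‖(T i - S) (b j)‖) l (𝓝 0) := by
    have := tendsto_finsetSum Finset.univ fun j _ => tendsto_iff_norm_sub_tendsto_zero.mp (h (b j))
    simpa using (tendsto_const_nhds (x := C)).mul this
  refine squeeze_zero (fun _ => norm_nonneg _) (fun i => hC ?_ fun j => ?_) hbasis
  · exact Finset.sum_nonneg fun j _ => norm_nonneg _
  · exact Finset.single_le_sum (f := fun j => ‖(T i - S) (b j)‖) (fun _ _ => norm_nonneg _)
      (Finset.mem_univ j)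

theorem eventually_norm_sub_apply_le_of_tendsto_apply (Y : Submodule 𝕜 E) [FiniteDimensional 𝕜 Y]
    {T : ι → E →L[𝕜] E} {l : Filter ι} (h : ∀ y ∈ Y, Tendsto (fun i => T i y) l (𝓝 y))
    {δ : ℝ} (hδ : 0 < δ) : ∀ᶠ i in l, ∀ y ∈ Y, ‖y - T i y‖ ≤ δ * ‖y‖ := by
  have hconv : Tendsto (fun i => (T i).comp Y.subtypeL) l (𝓝 Y.subtypeL) :=
    ContinuousLinearMap.tendsto_of_forall_tendsto_apply fun y => h y y.2
  filter_upwards [(tendsto_iff_norm_sub_tendsto_zero.mp hconv).eventually_lt_const hδ]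
    with i hi y hy
  calc ‖y - T i y‖ = ‖((T i).comp Y.subtypeL - Y.subtypeL) ⟨y, hy⟩‖ := by
        rw [← norm_neg]; simp
    _ ≤ ‖(T i).comp Y.subtypeL - Y.subtypeL‖ * ‖y‖ := ContinuousLinearMap.le_opNorm _ _
    _ ≤ δ * ‖y‖ := by gcongr

end FiniteDimensional

theorem norm_le_of_almost_projection {E P : Type*} [NormedAddCommGroup E] [FunLike P E E]
    [AddMonoidHomClass P E E] (π : P) {K δ : ℝ} (hδ : 0 ≤ δ) (hπ : ∀ v, ‖π v‖ ≤ K * ‖v‖)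
    {y z : E} (hy : ‖y - π y‖ ≤ δ * ‖y‖) (hz : ‖π z‖ ≤ δ * ‖z‖) :
    (1 - 2 * δ) * ‖y‖ ≤ (K + δ) * ‖y + z‖ := by
  have hz' : ‖z‖ ≤ ‖y + z‖ + ‖y‖ := by simpa using norm_sub_le (y + z) y
  have hdecomp : y = (y - π y) + π (y + z) - π z := by rw [map_add]; abel
  have : ‖y‖ ≤ δ * ‖y‖ + K * ‖y + z‖ + δ * (‖y + z‖ + ‖y‖) :=
    calc ‖y‖ = ‖(y - π y) + π (y + z) - π z‖ := congrArg _ hdecomp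
      _ ≤ ‖y - π y‖ + ‖π (y + z)‖ + ‖π z‖ := norm_sub_le_of_le (norm_add_le _ _) le_rfl
      _ ≤ δ * ‖y‖ + K * ‖y + z‖ + δ * (‖y + z‖ + ‖y‖) := by
        gcongr
        · exact hπ _
        · exact hz.trans (by gcongr)
  linarith

section SchauderFrame

variable {X : Type*} [NormedAddCommGroup X] [NormedSpace ℝ X] (x : ℕ → X) (f : ℕ → X →L[ℝ] ℝ)

theorem abs_le_tailSupX_mul (g : X →L[ℝ] ℝ) {N : ℕ} {z : X}
    (hz : z ∈ Submodule.span ℝ (x '' {i | N ≤ i})) : |g z| ≤ tailSupX x g N * ‖z‖ := by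
  rcases eq_or_ne z 0 with rfl | hz0
  · simp
  have hbdd : BddAbove ((fun z : X => |g z|) ''
      {z | z ∈ Submodule.span ℝ (x '' {i | N ≤ i}) ∧ ‖z‖ ≤ 1}) := by
    refine ⟨‖g‖, ?_⟩
    rintro _ ⟨w, ⟨-, hw⟩, rfl⟩
    simpa using g.le_of_opNorm_le_of_le le_rfl hw
  have hnz : 0 < ‖z‖ := norm_pos_iff.mpr hz0
  have hunit : |g (‖z‖⁻¹ • z)| ≤ tailSupX x g N := by
    refine le_csSup hbdd ⟨_, ⟨Submodule.smul_mem _ _ hz, ?_⟩, rfl⟩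
    rw [norm_smul, norm_inv, norm_norm, inv_mul_cancel₀ hnz.ne']
  rw [map_smul, smul_eq_mul, abs_mul, abs_inv, abs_norm, inv_mul_le_iff₀ hnz] at hunit
  linarith

noncomputable def framePartialSum (n : ℕ) : X →L[ℝ] X :=
  ∑ i ∈ Finset.range n, (f i).smulRight (x i)

@[simp]
theorem framePartialSum_apply (n : ℕ) (v : X) :
    framePartialSum x f n v = ∑ i ∈ Finset.range n, f i v • x i := by
  simp [framePartialSum]

variable {x f}

theorem norm_framePartialSum_le {K : ℝ}
    (hK : K ∈ upperBounds {r : ℝ | ∃ (v : X) (m n : ℕ), ‖v‖ ≤ 1 ∧ m ≤ n ∧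
      r = ‖∑ i ∈ Finset.Icc m n, f i v • x i‖}) (n : ℕ) :
    ‖framePartialSum x f n‖ ≤ K := by
  have hK0 : 0 ≤ K := hK ⟨0, 0, 0, by simp, le_rfl, by simp⟩
  refine ContinuousLinearMap.opNorm_le_of_unit_norm hK0 fun v hv => ?_
  cases n with
  | zero => simpa using hK0
  | succ n =>
    refine hK ⟨v, 0, n, hv.le, n.zero_le, ?_⟩
    rw [framePartialSum_apply, Finset.range_eq_Ico, Finset.Ico_add_one_right_eq_Icc]

theorem norm_framePartialSum_apply_le_of_mem_span (n : ℕ) {N : ℕ} {z : X}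
    (hz : z ∈ Submodule.span ℝ (x '' {i | N ≤ i})) :
    ‖framePartialSum x f n z‖ ≤ (∑ i ∈ Finset.range n, tailSupX x (f i) N * ‖x i‖) * ‖z‖ := by
  rw [framePartialSum_apply, Finset.sum_mul]
  refine (norm_sum_le _ _).trans (Finset.sum_le_sum fun i _ => ?_)
  rw [norm_smul, Real.norm_eq_abs, mul_right_comm]
  gcongr
  exact abs_le_tailSupX_mul x (f i) hz

theorem eventually_norm_framePartialSum_apply_le
    (hshr : ∀ m, Tendsto (tailSupX x (f m)) atTop (𝓝 0)) (n : ℕ) {δ : ℝ} (hδ : 0 < δ) :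
    ∀ᶠ N in atTop, ∀ z ∈ Submodule.span ℝ (x '' {i | N ≤ i}),
      ‖framePartialSum x f n z‖ ≤ δ * ‖z‖ := by
  have hsum : Tendsto (fun N => ∑ i ∈ Finset.range n, tailSupX x (f i) N * ‖x i‖)
      atTop (𝓝 0) := by
    simpa using tendsto_finsetSum _ fun i _ => (hshr i).mul_const ‖x i‖
  filter_upwards [hsum.eventually_le_const hδ] with N hN z hz
  exact (norm_framePartialSum_apply_le_of_mem_span n hz).trans (by gcongr)

end SchauderFrame

theorem schauderFrame_finiteDim_almost_projection_general
    {X : Type*} [NormedAddCommGroup X] [NormedSpace ℝ X]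
    (x : ℕ → X) (f : ℕ → X →L[ℝ] ℝ)
    (hframe : ∀ v : X,
      Tendsto (fun n => ∑ i ∈ Finset.range n, f i v • x i) atTop (𝓝 v))
    (hshr : ∀ m : ℕ, Tendsto (tailSupX x (f m)) atTop (𝓝 0))
    (K : ℝ)
    (hK : IsLUB {r : ℝ | ∃ (v : X) (m n : ℕ), ‖v‖ ≤ 1 ∧ m ≤ n ∧
      r = ‖∑ i ∈ Finset.Icc m n, f i v • x i‖} K)
    (Y : Submodule ℝ X) (hY : FiniteDimensional ℝ Y) :
    ∀ ε > (0 : ℝ), ∃ N : ℕ, ∀ y ∈ Y, ∀ z ∈ Submodule.span ℝ (x '' {i | N ≤ i}),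
      ‖y‖ ≤ (K + ε) * ‖y + z‖ := by
  intro ε hε
  have hK0 : 0 ≤ K := (norm_nonneg _).trans (norm_framePartialSum_le hK.1 0)
  -- `δ` is chosen so that `(K + δ) / (1 - 2δ) = K + ε`
  set δ := ε / (1 + 2 * (K + ε))
  have hδ : 0 < δ := by positivity
  have h2δ : 0 < 1 - 2 * δ := by
    rw [sub_pos, ← mul_div_assoc, div_lt_one (by positivity)]
    linarith
  have hKδ : K + δ = (K + ε) * (1 - 2 * δ) := by
    simp only [δ]
    field_simp
    ring
  obtain ⟨n, hn⟩ := (eventually_norm_sub_apply_le_of_tendsto_apply Y (T := framePartialSum x f)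
    (fun y _ => by simpa using hframe y) hδ).exists
  obtain ⟨N, hN⟩ := (eventually_norm_framePartialSum_apply_le hshr n hδ).exists
  refine ⟨N, fun y hy z hz => ?_⟩
  have key := norm_le_of_almost_projection (framePartialSum x f n) hδ.le
    ((framePartialSum x f n).le_of_opNorm_le (norm_framePartialSum_le hK.1 n)) (hn y hy) (hN z hz)
  rw [hKδ, mul_right_comm, mul_comm] at key
  exact le_of_mul_le_mul_right key h2δ

/-- Let `X` be a separable Banach space, `(x i, f i)` a locally shrinking
Schauder frame of `X` with projection constant `K`, and `Y` a finite-dimensional subspace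
of `X`. Then for every `ε > 0` there is `N ∈ ℕ` such that `‖y‖ ≤ (K + ε) ‖y + z‖` whenever
`z ∈ span (x i : i ≥ N)` and `y ∈ Y`. -/
theorem schauderFrame_finiteDim_almost_projection
    {X : Type*} [NormedAddCommGroup X] [NormedSpace ℝ X] [CompleteSpace X]
    [TopologicalSpace.SeparableSpace X]
    (x : ℕ → X) (f : ℕ → X →L[ℝ] ℝ)
    (hx : ∀ i, x i ≠ 0) (hf : ∀ i, f i ≠ 0)
    (hframe : ∀ v : X,
      Tendsto (fun n => ∑ i ∈ Finset.range n, f i v • x i) atTop (𝓝 v))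
    (hshr : ∀ m : ℕ, Tendsto (tailSupX x (f m)) atTop (𝓝 0))
    (K : ℝ)
    (hK : IsLUB {r : ℝ | ∃ (v : X) (m n : ℕ), ‖v‖ ≤ 1 ∧ m ≤ n ∧
      r = ‖∑ i ∈ Finset.Icc m n, f i v • x i‖} K)
    (Y : Submodule ℝ X) (hY : FiniteDimensional ℝ Y) :
    ∀ ε > (0 : ℝ), ∃ N : ℕ, ∀ y ∈ Y, ∀ z ∈ Submodule.span ℝ (x '' {i | N ≤ i}),
      ‖y‖ ≤ (K + ε) * ‖y + z‖ :=
  schauderFrame_finiteDim_almost_projection_general x f hframe hshr K hK Y hY
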